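/- For all integers s ≥ 0 and a ≥ 1, one has Z_s(z_1^a) = Σ_{γ∈I(a,s+a)} z_{γ_1}···z_{γ_a}, where the sum is over all multi-indices γ = (γ_1,...,γ_a) of positive integers with γ_1+...+γ_a = s+a. -/

import Mathlib

open scoped BigOperators

noncomputable section

attribute [local instance 10] Classical.propDecidable

/-- The `q`-integer `[n] = (1 - q^n)/(1 - q)`. -/
def qint (q : ℝ) (n : ℕ) : ℝ := (1 - q ^ n) / (1 - q)

/-- `I(r,n)`: multi-indices of positive integers of depth `r` and weight `n`. -/
def Ifin (r n : ℕ) : Finset (Fin r → ℕ) :=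
  (Fintype.piFinset fun _ : Fin r => Finset.Icc 1 n).filter fun c => (∑ i, c i) = n

/-- `I₀(r,n)`: admissible multi-indices (first entry at least 2). -/
def I0fin (r n : ℕ) : Finset (Fin r → ℕ) :=
  (Ifin r n).filter fun c => ∀ h : 0 < r, 2 ≤ c ⟨0, h⟩

/-- The `q`-analogue of the multiple zeta value,
`ζ_q(α) = Σ_{m_1 > ... > m_r > 0} Π_j q^{(α_j - 1) m_j}/[m_j]^{α_j}`. -/
def zetaQ (q : ℝ) {r : ℕ} (α : Fin r → ℕ) : ℝ :=
  ∑' m : {m : Fin r → ℕ // (∀ i j : Fin r, i < j → m j < m i) ∧ ∀ i, 0 < m i},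
    ∏ j, q ^ ((α j - 1) * m.1 j) / qint q (m.1 j) ^ α j

/-- `K_{b,n}(M) = Σ_{α ∈ I₀(b,n)} Σ_{m_1 > ... > m_{b-1} > m_b = M} Π_j q^{(α_j-1)m_j}/[m_j]^{α_j}`. -/
def Kfun (q : ℝ) (b n M : ℕ) : ℝ :=
  ∑ α ∈ I0fin b n,
    ∑' m : {m : Fin b → ℕ //
        (∀ i j : Fin b, i < j → m j < m i) ∧
          ∀ h : 0 < b, m ⟨b - 1, Nat.sub_lt h Nat.one_pos⟩ = M},
      ∏ j, q ^ ((α j - 1) * m.1 j) / qint q (m.1 j) ^ α j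

/-- `f_ℓ(N,M) = Σ_{N = k_1 > k_2 > ... > k_ℓ > M} (q^{k_1-M}/[k_1-M]) Π_{j=2}^{ℓ} 1/[k_j-M]`. -/
def fS (q : ℝ) (l N M : ℕ) : ℝ :=
  ∑ k ∈ (Fintype.piFinset fun _ : Fin l => Finset.Ioc M N).filter
      (fun k => (∀ i j : Fin l, i < j → k j < k i) ∧ ∀ h : 0 < l, k ⟨0, h⟩ = N),
    ∏ j : Fin l, (if (j : ℕ) = 0 then q ^ (k j - M) else 1) / qint q (k j - M)

/-- `g_{ℓ,β}(M) = Σ_{M = m_1 ≥ m_2 ≥ ... ≥ m_ℓ ≥ 1} (q^{(β-1)m_1}/[m_1]^β) Π_{j=2}^{ℓ} q^{m_j}/[m_j]`. -/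
def gS (q : ℝ) (l β M : ℕ) : ℝ :=
  ∑ m ∈ (Fintype.piFinset fun _ : Fin l => Finset.Icc 1 M).filter
      (fun m => (∀ i j : Fin l, i ≤ j → m j ≤ m i) ∧ ∀ h : 0 < l, m ⟨0, h⟩ = M),
    ∏ j : Fin l, if (j : ℕ) = 0 then q ^ ((β - 1) * m j) / qint q (m j) ^ β
      else q ^ m j / qint q (m j)

/-- `h_{r,ℓ}(N_1,...,N_r,M) = Σ_{c ∈ I(r,ℓ)} (Π_{j=1}^{r-1} f_{c_j}(N_j,N_{j+1})) f_{c_r}(N_r,M)`. -/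
def hS (q : ℝ) (r l : ℕ) (N : Fin r → ℕ) (M : ℕ) : ℝ :=
  ∑ c ∈ Ifin r l,
    ∏ j : Fin r, fS q (c j) (N j) (if h : (j : ℕ) + 1 < r then N ⟨(j : ℕ) + 1, h⟩ else M)

/-- `p(n_1,...,n_s;m) = (q^{n_1-m}/[n_1-m]) Π_{j=2}^{s} 1/[n_j-m]`, with `p(∅;m) = 1`. -/
def pS (q : ℝ) {s : ℕ} (n : Fin s → ℕ) (m : ℕ) : ℝ :=
  ∏ j : Fin s, (if (j : ℕ) = 0 then q ^ (n j - m) else 1) / qint q (n j - m)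

/-! ### The algebras 𝔡, 𝔡_ξ and 𝔡₁ -/

/-- The alphabet `S = {z_k}_{k ≥ 1} ∪ {ξ_k}_{k ≥ 1}`: `Sum.inl k = z_k`, `Sum.inr k = ξ_k`. -/
abbrev Letter : Type := ℕ+ ⊕ ℕ+

/-- The noncommutative polynomial algebra 𝔡 over ℤ freely generated by `S`. -/
abbrev Dfree : Type := MonoidAlgebra ℤ (FreeMonoid Letter)

/-- The subalgebra 𝔡_ξ generated by the `ξ_k`, realized as a free algebra on `{ξ_k}_{k≥1}`. -/
abbrev DXi : Type := MonoidAlgebra ℤ (FreeMonoid ℕ+)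

/-- The subalgebra 𝔡₁ generated by `z_1` and `ξ_1`, realized as a free algebra on two letters
(`false = z_1`, `true = ξ_1`). -/
abbrev DOne : Type := MonoidAlgebra ℤ (FreeMonoid Bool)

/-- The generator `z_k` of 𝔡. -/
def zL (k : ℕ+) : Dfree := MonoidAlgebra.single (FreeMonoid.of (Sum.inl k)) 1

/-- The generator `ξ_k` of 𝔡. -/
def xiL (k : ℕ+) : Dfree := MonoidAlgebra.single (FreeMonoid.of (Sum.inr k)) 1

/-- The generator `ξ_k` of 𝔡_ξ. -/
def xiX (k : ℕ+) : DXi := MonoidAlgebra.single (FreeMonoid.of k) 1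

/-- The generator `z_1` of 𝔡₁. -/
def zO : DOne := MonoidAlgebra.single (FreeMonoid.of false) 1

/-- The generator `ξ_1` of 𝔡₁. -/
def xiO : DOne := MonoidAlgebra.single (FreeMonoid.of true) 1

/-- `z_k` for a natural number index `k ≥ 1` (junk value `0` for `k = 0`). -/
def zOf (k : ℕ) : Dfree := if h : 0 < k then zL ⟨k, h⟩ else 0

/-- `ξ_k ∈ 𝔡_ξ` for a natural number index `k ≥ 1` (junk value `0` for `k = 0`). -/
def xiOf (k : ℕ) : DXi := if h : 0 < k then xiX ⟨k, h⟩ else 0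

/-- The canonical embedding `𝔡_ξ ↪ 𝔡`. -/
def toD (v : DXi) : Dfree := MonoidAlgebra.ofCoeff (Finsupp.mapDomain (FreeMonoid.map Sum.inr) v.coeff)

/-- The canonical embedding `𝔡₁ ↪ 𝔡` (`false ↦ z_1`, `true ↦ ξ_1`). -/
def toD1 (w : DOne) : Dfree :=
  MonoidAlgebra.ofCoeff (Finsupp.mapDomain (FreeMonoid.map fun b => if b then Sum.inr 1 else Sum.inl 1) w.coeff)

/-- `J_{z_k}(m) = q^{(k-1)m}/[m]^k` and `J_{ξ_k}(m) = q^{km}/[m]^k`. -/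
def Jlet (q : ℝ) : Letter → ℕ → ℝ
  | Sum.inl k, m => q ^ (((k : ℕ) - 1) * m) / qint q m ^ (k : ℕ)
  | Sum.inr k, m => q ^ ((k : ℕ) * m) / qint q m ^ (k : ℕ)

/-- `A_w(M) = Σ_{M > m_1 > ... > m_r > 0} J_{u_1}(m_1) ⋯ J_{u_r}(m_r)` for a word `w = u_1 ⋯ u_r`. -/
def AW (q : ℝ) (w : List Letter) (M : ℕ) : ℝ :=
  ∑ m ∈ (Fintype.piFinset fun _ : Fin w.length => Finset.Ioo 0 M).filter
      (fun m => ∀ i j, i < j → m j < m i),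
    ∏ j, Jlet q (w.get j) (m j)

/-- `A*_w(M) = Σ_{M > m_1 ≥ ... ≥ m_r ≥ 1} J_{u_1}(m_1) ⋯ J_{u_r}(m_r)` for a word `w = u_1 ⋯ u_r`. -/
def AstarW (q : ℝ) (w : List Letter) (M : ℕ) : ℝ :=
  ∑ m ∈ (Fintype.piFinset fun _ : Fin w.length => Finset.Ioo 0 M).filter
      (fun m => ∀ i j, i ≤ j → m j ≤ m i),
    ∏ j, Jlet q (w.get j) (m j)

/-- The ℤ-linear extension `A(M) : 𝔡 → ℝ`. -/
def Amap (q : ℝ) (x : Dfree) (M : ℕ) : ℝ :=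
  Finsupp.sum x.coeff fun w a => (a : ℝ) * AW q (FreeMonoid.toList w) M

/-- The ℤ-linear extension `A*(M) : 𝔡 → ℝ`. -/
def Astarmap (q : ℝ) (x : Dfree) (M : ℕ) : ℝ :=
  Finsupp.sum x.coeff fun w a => (a : ℝ) * AstarW q (FreeMonoid.toList w) M

/-- The map `ρ` on words:  `ρ(1,w) = w`, `ρ(v,1) = v`,
`ρ(ξ_k v, z_ℓ w) = ξ_k ρ(v, z_ℓ w) + z_ℓ ρ(ξ_k v, w) + z_{k+ℓ} ρ(v,w)`, and
`ρ(ξ_k v, ξ_ℓ w) = ξ_k ρ(v, ξ_ℓ w) + ξ_ℓ ρ(ξ_k v, w) + ξ_{k+ℓ} ρ(v,w)`. -/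
def rhoW : List ℕ+ → List Letter → Dfree
  | [], w => MonoidAlgebra.single (FreeMonoid.ofList w) 1
  | k :: v, [] => MonoidAlgebra.single (FreeMonoid.ofList ((k :: v).map Sum.inr)) 1
  | k :: v, Sum.inl l :: w =>
      xiL k * rhoW v (Sum.inl l :: w) + zL l * rhoW (k :: v) w + zL (k + l) * rhoW v w
  | k :: v, Sum.inr l :: w =>
      xiL k * rhoW v (Sum.inr l :: w) + xiL l * rhoW (k :: v) w + xiL (k + l) * rhoW v w
  termination_by v w => v.length + w.length

/-- The ℤ-bilinear map `ρ : 𝔡_ξ × 𝔡 → 𝔡`. -/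
def rho (v : DXi) (x : Dfree) : Dfree :=
  Finsupp.sum v.coeff fun vw a =>
    Finsupp.sum x.coeff fun xw b => (a * b) • rhoW (FreeMonoid.toList vw) (FreeMonoid.toList xw)

/-- `ξ_k ∘ ·` on words: `ξ_k ∘ 1 = 0` and `ξ_k ∘ (ξ_ℓ v) = ξ_{k+ℓ} v`. -/
def circW (k : ℕ+) : List ℕ+ → DXi
  | [] => 0
  | l :: v => MonoidAlgebra.single (FreeMonoid.ofList ((k + l) :: v)) 1

/-- The ℤ-linear map `ξ_k ∘ · : 𝔡_ξ → 𝔡_ξ`. -/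
def circ (k : ℕ+) (x : DXi) : DXi :=
  Finsupp.sum x.coeff fun w a => a • circW k (FreeMonoid.toList w)

/-- The map `d` on words: `d(1) = 1` and `d(ξ_k v) = ξ_k d(v) + ξ_k ∘ d(v)`. -/
def dW : List ℕ+ → DXi
  | [] => 1
  | k :: v => xiX k * dW v + circ k (dW v)

/-- The ℤ-linear map `d : 𝔡_ξ → 𝔡_ξ`. -/
def dmap (v : DXi) : DXi := Finsupp.sum v.coeff fun w a => a • dW (FreeMonoid.toList w)

/-- The maps `φ_s` on words of 𝔡₁: `φ_0 = id`, `φ_s(1) = ξ_1 z_1^{s-1}` for `s ≥ 1`,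
`φ_s(z_1 w) = z_1 φ_s(w) + ξ_1 Σ_{i=1}^{s} z_1^i φ_{s-i}(w)`, and
`φ_s(ξ_1 w) = ξ_1 Σ_{i=0}^{s} z_1^i φ_{s-i}(w)`. -/
def phiW : ℕ → List Bool → DOne
  | s, [] =>
      if s = 0 then 1
      else MonoidAlgebra.single (FreeMonoid.ofList (true :: List.replicate (s - 1) false)) 1
  | s, false :: w =>
      zO * phiW s w +
        ∑ i ∈ Finset.Icc 1 s, xiO * zO ^ i * phiW (s - i) w
  | s, true :: w =>
      ∑ i ∈ Finset.range (s + 1), xiO * zO ^ i * phiW (s - i) w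
  termination_by _ w => w.length

/-- The ℤ-linear maps `φ_s : 𝔡₁ → 𝔡₁`. -/
def phi (s : ℕ) (x : DOne) : DOne := Finsupp.sum x.coeff fun w a => a • phiW s (FreeMonoid.toList w)

/-- `Φ_0 = id` and `Φ_ℓ = Σ_{r=1}^{ℓ} (-1)^r Σ_{c ∈ I(r,ℓ)} φ_{c_1} ⋯ φ_{c_r}` for `ℓ ≥ 1`. -/
def PhiM : ℕ → DOne → DOne
  | 0 => id
  | l + 1 => fun x =>
      ∑ r ∈ Finset.Icc 1 (l + 1),
        (-1 : ℤ) ^ r •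
          ∑ c ∈ Ifin r (l + 1), ((List.ofFn fun j : Fin r => phi (c j)).foldr (· ∘ ·) id) x

/-- `Z_s(w) = Σ_{ℓ=0}^{s} ρ(d(ξ_1^{s-ℓ}), Φ_ℓ(w))`. -/
def Zmap (s : ℕ) (w : DOne) : Dfree :=
  ∑ l ∈ Finset.range (s + 1), rho (dmap (xiX 1 ^ (s - l))) (toD1 (PhiM l w))
/-!
Work with generating functions in a central variable `t`. Put `D(t) = Σ_m d(ξ_1^m) t^m` and, for
a letter `u`, `u(t) = Σ_k u^{+k} t^k`, where `u^{+k}` is `u` with its index raised by `k`. Since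
`D(t) = 1 + t ξ(t) D(t)` with `ξ(t) = Σ_k ξ_{k+1} t^k`, the recursion of `ρ` becomes
`(1 - t ξ(t)) ρ(D(t), u y) = u(t) ρ(D(t), y)`. Likewise `φ(t) = Σ_s φ_s t^s` satisfies
`φ(t)(z_1 w) = φ(t)(1) z_1 φ(t)(w)` and `φ(t)(ξ_1 w) = ξ_1 (1 - z_1 t)⁻¹ φ(t)(w)`, where
`φ(t)(1) = 1 + t ξ_1 (1 - z_1 t)⁻¹`. Both are rules `V P(z_1 w) = Z P(w)`, `V P(ξ_1 w) = Y P(w)`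
with `V + t Y = 1`: take `V = 1 - t ξ(t)` for `P = ρ(D(t), ·)` and `V = φ(t)(1)⁻¹` for `P = φ(t)`.

Let `B(a,ℓ)` be the sum of all words with `a` letters `z_1` and `ℓ` letters `ξ_1`. The recursion
`B(a+1,ℓ+1) = z_1 B(a,ℓ+1) + ξ_1 B(a+1,ℓ)` turns such rules into
`Σ_ℓ (-t)^ℓ P(B(a,ℓ)) = Z^a V P(1)`. For `P = φ(t)` this reads `φ(t)(Σ_ℓ (-t)^ℓ B(a,ℓ)) = z_1^a`;
as `Φ(t)` is the inverse of `φ(t)`, `Φ_ℓ(z_1^a) = (-1)^ℓ B(a,ℓ)`. For `P = ρ(D(t), ·)` it then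
reads `Σ_s Z_s(z_1^a) t^s = z_1(t)^a`, whose coefficient of `t^s` is the sum over the compositions
of `s + a` into `a` parts.
-/

open Finset PowerSeries

section Compositions

lemma mem_Ifin {r n : ℕ} {c : Fin r → ℕ} : c ∈ Ifin r n ↔ (∀ i, 1 ≤ c i) ∧ ∑ i, c i = n := by
  simp only [Ifin, mem_filter, Fintype.mem_piFinset, mem_Icc]
  refine ⟨fun ⟨h, hs⟩ => ⟨fun i => (h i).1, hs⟩, ?_⟩
  rintro ⟨h, rfl⟩
  exact ⟨fun i => ⟨h i, single_le_sum (fun j _ => Nat.zero_le (c j)) (mem_univ i)⟩, rfl⟩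

lemma Ifin_eq_empty_of_lt {r n : ℕ} (h : n < r) : Ifin r n = ∅ := by
  refine eq_empty_of_forall_notMem fun c hc => ?_
  obtain ⟨hpos, rfl⟩ := mem_Ifin.1 hc
  have : r ≤ ∑ i, c i := by simpa using sum_le_sum fun i (_ : i ∈ univ) => hpos i
  omega

lemma sum_Ifin_zero {M : Type*} [AddCommMonoid M] (n : ℕ) (F : (Fin 0 → ℕ) → M) :
    ∑ c ∈ Ifin 0 n, F c = if n = 0 then F Fin.elim0 else 0 := by
  split_ifs with hn
  · rw [show Ifin 0 n = {Fin.elim0} by ext c; simp [mem_Ifin, hn, eq_iff_true_of_subsingleton],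
      sum_singleton]
  · rw [show Ifin 0 n = ∅ by ext c; simp [mem_Ifin, Ne.symm hn], sum_empty]

lemma sum_Ifin_succ {M : Type*} [AddCommMonoid M] (r n : ℕ) (F : (Fin (r + 1) → ℕ) → M) :
    ∑ c ∈ Ifin (r + 1) n, F c = ∑ i ∈ Icc 1 n, ∑ c ∈ Ifin r (n - i), F (Fin.cons i c) := by
  rw [sum_sigma']
  refine sum_nbij' (fun c => ⟨c 0, Fin.tail c⟩) (fun p => Fin.cons p.1 p.2) ?_ ?_ ?_ ?_ ?_
  · intro c hc
    simp only [mem_sigma, mem_Icc, mem_Ifin, Fin.forall_fin_succ, Fin.sum_univ_succ,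
      Fin.tail_def] at hc ⊢
    exact ⟨⟨hc.1.1, by omega⟩, hc.1.2, by omega⟩
  · rintro ⟨i, c⟩ hc
    simp only [mem_sigma, mem_Icc, mem_Ifin, Fin.forall_fin_succ, Fin.sum_univ_succ,
      Fin.cons_zero, Fin.cons_succ] at hc ⊢
    exact ⟨⟨hc.1.1, hc.2.1⟩, by omega⟩
  · intro c _
    exact Fin.cons_self_tail c
  · rintro ⟨i, c⟩ _
    simp
  · intro c _
    rw [Fin.cons_self_tail]

lemma sum_antidiagonal_eq_add_sum_Icc {M : Type*} [AddCommMonoid M] (n : ℕ) (f : ℕ → ℕ → M) :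
    ∑ p ∈ antidiagonal n, f p.1 p.2 = f 0 n + ∑ i ∈ Icc 1 n, f i (n - i) := by
  rw [Nat.sum_antidiagonal_eq_sum_range_succ f n, sum_range_succ', add_comm, Nat.sub_zero,
    ← Ico_add_one_right_eq_Icc, sum_Ico_eq_sum_range, add_tsub_cancel_right]
  simp only [add_comm 1]

lemma coeff_pow_eq_sum_Ifin {R : Type*} [Semiring R] {f : R⟦X⟧} (hf : constantCoeff f = 0)
    (r n : ℕ) :
    coeff n (f ^ r) = ∑ c ∈ Ifin r n, (List.ofFn fun j => coeff (c j) f).prod := by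
  induction r generalizing n with
  | zero => rw [pow_zero, coeff_one, sum_Ifin_zero]; rfl
  | succ r ih =>
    rw [pow_succ', coeff_mul,
      sum_antidiagonal_eq_add_sum_Icc n fun i j => coeff i f * coeff j (f ^ r),
      coeff_zero_eq_constantCoeff_apply, hf, zero_mul, zero_add, sum_Ifin_succ]
    simp [ih, mul_sum]

end Compositions

section AlternatingSums

variable {R : Type*} [Ring R]

/-- `altSum G = ∑ₗ (-X)^l G l`, written coefficientwise since the sum is infinite. -/
def altSum (G : ℕ → R⟦X⟧) : R⟦X⟧ :=
  mk fun n => ∑ p ∈ antidiagonal n, (-1 : ℤ) ^ p.1 • coeff p.2 (G p.1)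

lemma coeff_altSum (G : ℕ → R⟦X⟧) (n : ℕ) :
    coeff n (altSum G) = ∑ p ∈ antidiagonal n, (-1 : ℤ) ^ p.1 • coeff p.2 (G p.1) :=
  coeff_mk _ _

lemma altSum_eq_sub (G : ℕ → R⟦X⟧) : altSum G = G 0 - X * altSum (fun l => G (l + 1)) := by
  ext (_ | n) : 1
  · simp [coeff_altSum]
  · rw [map_sub, coeff_succ_X_mul, coeff_altSum, coeff_altSum, Nat.sum_antidiagonal_succ]
    simp [pow_succ, sum_neg_distrib, sub_eq_add_neg]

lemma altSum_add (F G : ℕ → R⟦X⟧) :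
    altSum (fun l => F l + G l) = altSum F + altSum G := by
  ext n : 1
  simp [coeff_altSum, sum_add_distrib]

lemma mul_altSum (c : R⟦X⟧) (G : ℕ → R⟦X⟧) : c * altSum G = altSum fun l => c * G l := by
  ext n : 1
  simp only [coeff_mul, coeff_altSum, mul_sum, smul_sum, mul_smul_comm, sum_sigma']
  -- both sides run over the triples `(i, l, m)` with `i + l + m = n`
  refine sum_nbij' (fun x => ⟨(x.2.1, x.1.1 + x.2.2), (x.1.1, x.2.2)⟩)
    (fun x => ⟨(x.2.1, x.1.1 + x.2.2), (x.1.1, x.2.2)⟩) ?_ ?_ ?_ ?_ ?_ <;>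
  aesop (add simp [add_assoc, add_left_comm])

end AlternatingSums

section Linearity

lemma rho_single_single (vw : FreeMonoid ℕ+) (xw : FreeMonoid Letter) (a b : ℤ) :
    rho (.single vw a) (.single xw b) = (a * b) • rhoW vw.toList xw.toList := by
  simp [rho]

lemma rho_add_left (v v' : DXi) (x : Dfree) : rho (v + v') x = rho v x + rho v' x :=
  Finsupp.sum_add_index' (by simp) fun _ _ _ => by simp [add_mul, add_smul, Finsupp.sum_add]

lemma rho_add_right (v : DXi) (x y : Dfree) : rho v (x + y) = rho v x + rho v y := by
  rw [rho, rho, rho, ← Finsupp.sum_add]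
  exact Finsupp.sum_congr fun _ _ =>
    Finsupp.sum_add_index' (by simp) fun _ _ _ => by simp [mul_add, add_smul]

def rhoLeft (x : Dfree) : DXi →+ Dfree := AddMonoidHom.mk' (rho · x) fun v v' => rho_add_left v v' x

def rhoRight (v : DXi) : Dfree →+ Dfree := AddMonoidHom.mk' (rho v) (rho_add_right v)

lemma rho_zero_left (x : Dfree) : rho 0 x = 0 := map_zero (rhoLeft x)

lemma rho_zero_right (v : DXi) : rho v 0 = 0 := map_zero (rhoRight v)

lemma rho_sum_left {ι : Type*} (s : Finset ι) (f : ι → DXi) (x : Dfree) :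
    rho (∑ i ∈ s, f i) x = ∑ i ∈ s, rho (f i) x :=
  map_sum (rhoLeft x) f s

lemma rho_zsmul_right (c : ℤ) (v : DXi) (x : Dfree) : rho v (c • x) = c • rho v x :=
  map_zsmul (rhoRight v) c x

lemma phi_single (s : ℕ) (w : FreeMonoid Bool) (a : ℤ) :
    phi s (.single w a) = a • phiW s w.toList := by
  simp [phi]

def phiHom (s : ℕ) : DOne →+ DOne :=
  AddMonoidHom.mk' (phi s) fun _ _ =>
    Finsupp.sum_add_index' (by simp) fun _ _ _ => by simp [add_smul]

lemma phi_zero (s : ℕ) : phi s 0 = 0 := map_zero (phiHom s)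

lemma phi_add (s : ℕ) (x y : DOne) : phi s (x + y) = phi s x + phi s y :=
  map_add (phiHom s) x y

lemma phi_sum {ι : Type*} (s : ℕ) (t : Finset ι) (f : ι → DOne) :
    phi s (∑ i ∈ t, f i) = ∑ i ∈ t, phi s (f i) :=
  map_sum (phiHom s) f t

lemma phi_zsmul (s : ℕ) (c : ℤ) (x : DOne) : phi s (c • x) = c • phi s x :=
  map_zsmul (phiHom s) c x

def circHom (k : ℕ+) : DXi →+ DXi :=
  AddMonoidHom.mk' (circ k) fun _ _ =>
    Finsupp.sum_add_index' (by simp) fun _ _ _ => by simp [add_smul]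

lemma circ_add (k : ℕ+) (x y : DXi) : circ k (x + y) = circ k x + circ k y :=
  map_add (circHom k) x y

lemma circ_sum {ι : Type*} (k : ℕ+) (t : Finset ι) (f : ι → DXi) :
    circ k (∑ i ∈ t, f i) = ∑ i ∈ t, circ k (f i) :=
  map_sum (circHom k) f t

def toD1Hom : DOne →+* Dfree :=
  MonoidAlgebra.mapDomainRingHom ℤ (FreeMonoid.map fun b => if b then Sum.inr 1 else Sum.inl 1)

lemma toD1Hom_apply (w : DOne) : toD1Hom w = toD1 w := rfl

end Linearity

section Letters

def letter (u : Letter) : Dfree := .single (FreeMonoid.of u) 1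

lemma letter_mul_single (u : Letter) (w : FreeMonoid Letter) (b : ℤ) :
    letter u * .single w b = .single (FreeMonoid.of u * w) b := by
  simp [letter, MonoidAlgebra.single_mul_single]

lemma xiX_mul_single (k : ℕ+) (w : FreeMonoid ℕ+) (a : ℤ) :
    xiX k * .single w a = .single (FreeMonoid.of k * w) a := by
  simp [xiX, MonoidAlgebra.single_mul_single]

lemma rho_one_left (x : Dfree) : rho 1 x = x := by
  induction x using MonoidAlgebra.induction_linear with
  | zero => exact map_zero (rhoRight 1)
  | add x y hx hy => rw [rho_add_right, hx, hy]
  | single w b => simp [MonoidAlgebra.one_def, rho_single_single, rhoW]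

lemma rho_xiX_mul_one (k : ℕ+) (v : DXi) : rho (xiX k * v) 1 = xiL k * rho v 1 := by
  induction v using MonoidAlgebra.induction_linear with
  | zero => simp [rho_zero_left]
  | add v v' hv hv' => rw [mul_add, rho_add_left, rho_add_left, hv, hv', mul_add]
  | single vw a =>
    cases h : vw.toList <;>
      simp [xiX_mul_single, MonoidAlgebra.one_def, rho_single_single, rhoW, h, xiL,
        MonoidAlgebra.single_mul_single]

lemma rho_xiX_mul_letter_mul (k : ℕ+) (u : Letter) (v : DXi) (x : Dfree) :
    rho (xiX k * v) (letter u * x) = xiL k * rho v (letter u * x) +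
      letter u * rho (xiX k * v) x + letter (Sum.map (k + ·) (k + ·) u) * rho v x := by
  induction v using MonoidAlgebra.induction_linear with
  | zero => simp [rho_zero_left]
  | add v v' hv hv' => simp only [mul_add, rho_add_left, hv, hv']; abel
  | single vw a =>
    induction x using MonoidAlgebra.induction_linear with
    | zero => simp [rho_zero_right]
    | add x x' hx hx' => simp only [mul_add, rho_add_right, hx, hx']; abel
    | single xw b =>
      simp only [xiX_mul_single, letter_mul_single, rho_single_single, FreeMonoid.toList_of_mul]
      cases u <;> simp only [rhoW, smul_add, mul_smul_comm, Sum.map_inl, Sum.map_inr] <;> rfl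

lemma toD1Hom_zO : toD1Hom zO = letter (.inl 1) := by
  simp [toD1Hom, zO, letter]

lemma toD1Hom_xiO : toD1Hom xiO = letter (.inr 1) := by
  simp [toD1Hom, xiO, letter]

end Letters

section Shuffles

/-- `shuffleSum a l` is the sum of all words in `z_1, ξ_1` with `a` letters `z_1` and `l`
letters `ξ_1`. -/
def shuffleSum : ℕ → ℕ → DOne
  | 0, 0 => 1
  | 0, l + 1 => xiO * shuffleSum 0 l
  | a + 1, 0 => zO * shuffleSum a 0
  | a + 1, l + 1 => zO * shuffleSum a (l + 1) + xiO * shuffleSum (a + 1) l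

variable {R : Type*} [Ring R] (P : DOne →+ R⟦X⟧) {V Y Z : R⟦X⟧}

theorem altSum_shuffleSum (hV : V + X * Y = 1) (hz : ∀ w, V * P (zO * w) = Z * P w)
    (hξ : ∀ w, V * P (xiO * w) = Y * P w) (a : ℕ) :
    altSum (fun l => P (shuffleSum a l)) = Z ^ a * (V * P 1) := by
  have cancel (S T : R⟦X⟧) (h : V * S = T - X * (Y * S)) : S = T := by
    calc S = (V + X * Y) * S := by rw [hV, one_mul]
      _ = T := by rw [add_mul, h, mul_assoc]; abel
  induction a with
  | zero =>
    rw [pow_zero, one_mul]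
    refine cancel _ _ ?_
    rw [mul_altSum, altSum_eq_sub]
    simp only [shuffleSum, hξ, ← mul_altSum]
  | succ a ih =>
    rw [pow_succ', mul_assoc, ← ih]
    refine cancel _ _ ?_
    rw [mul_altSum, altSum_eq_sub, altSum_eq_sub (fun l => P (shuffleSum a l))]
    simp only [shuffleSum, map_add, mul_add, hz, hξ, altSum_add, ← mul_altSum]
    rw [mul_sub, ← mul_assoc X Z, ← (commute_X Z).eq, mul_assoc]
    abel

end Shuffles

section RhoSeries

lemma xiX_one_pow (m : ℕ) : xiX 1 ^ m = .single (FreeMonoid.ofList (List.replicate m 1)) 1 := by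
  induction m with
  | zero => rfl
  | succ m ih => rw [pow_succ', ih, xiX_mul_single, List.replicate_succ, FreeMonoid.ofList_cons]

lemma circ_xiX_mul (j l : ℕ+) (u : DXi) : circ j (xiX l * u) = xiX (j + l) * u := by
  induction u using MonoidAlgebra.induction_linear with
  | zero => simp [circ]
  | add u u' hu hu' => rw [mul_add, circ_add, hu, hu', mul_add]
  | single w a => simp [xiX_mul_single, circ, circW, -zsmul_eq_mul]

lemma circ_one (k : ℕ+) : circ k 1 = 0 := by
  simp [circ, MonoidAlgebra.one_def, circW]

/-- So `d(ξ_1^m)` is the sum of the words `ξ_{c_1} ⋯ ξ_{c_r}` over all compositions `c` of `m`. -/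
lemma dmap_xiX_one_pow_succ (n : ℕ) :
    dmap (xiX 1 ^ (n + 1)) = ∑ p ∈ antidiagonal n, xiX p.1.succPNat * dmap (xiX 1 ^ p.2) := by
  simp only [dmap, xiX_one_pow, MonoidAlgebra.coeff_single, Finsupp.sum_single_index,
    zero_smul, one_smul, FreeMonoid.toList_ofList]
  induction n with
  | zero =>
    rw [Nat.antidiagonal_zero, sum_singleton, List.replicate_one, dW, dW, circ_one, add_zero]
    rfl
  | succ n ih =>
    rw [List.replicate_succ, dW, Nat.sum_antidiagonal_succ]
    congr 1
    rw [ih, circ_sum]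
    refine sum_congr rfl fun p _ => ?_
    rw [circ_xiX_mul]
    congr 2
    exact PNat.eq (Nat.add_comm _ _)

lemma dmap_one : dmap 1 = 1 := by
  simp [dmap, MonoidAlgebra.one_def, dW]

def rhoSeries : Dfree →+ Dfree⟦X⟧ where
  toFun y := mk fun m => rho (dmap (xiX 1 ^ m)) y
  map_zero' := by ext; simp [rho_zero_right]
  map_add' _ _ := by ext; simp [rho_add_right]

lemma coeff_rhoSeries (m : ℕ) (y : Dfree) : coeff m (rhoSeries y) = rho (dmap (xiX 1 ^ m)) y :=
  coeff_mk _ fun m => rho (dmap (xiX 1 ^ m)) y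

def xiSeries : Dfree⟦X⟧ := mk fun k => xiL k.succPNat

def shiftLetter (k : ℕ) : Letter → Letter :=
  Sum.map (fun l => ⟨k + l, by positivity⟩) (fun l => ⟨k + l, by positivity⟩)

lemma shiftLetter_zero (u : Letter) : shiftLetter 0 u = u := by
  cases u <;> exact congrArg _ (PNat.eq (zero_add _))

lemma shiftLetter_succ (k : ℕ) (u : Letter) :
    shiftLetter (k + 1) u = Sum.map (k.succPNat + ·) (k.succPNat + ·) u :=
  rfl

def letterSeries (u : Letter) : Dfree⟦X⟧ := mk fun k => letter (shiftLetter k u)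

lemma rhoSeries_one : rhoSeries 1 = 1 + X * (xiSeries * rhoSeries 1) := by
  ext (_ | n) : 1
  · simp [coeff_rhoSeries, dmap_one, rho_one_left]
  · rw [map_add, coeff_succ_X_mul, coeff_one, coeff_mul, coeff_rhoSeries, dmap_xiX_one_pow_succ,
      rho_sum_left]
    simp [rho_xiX_mul_one, coeff_rhoSeries, xiSeries]

lemma rhoSeries_letter_mul (u : Letter) (y : Dfree) :
    rhoSeries (letter u * y) =
      X * (xiSeries * rhoSeries (letter u * y)) + letterSeries u * rhoSeries y := by
  ext (_ | n) : 1
  · rw [map_add, coeff_zero_X_mul, zero_add, coeff_mul, Nat.antidiagonal_zero, sum_singleton]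
    simp [coeff_rhoSeries, dmap_one, rho_one_left, letterSeries, shiftLetter_zero]
  · rw [map_add, coeff_succ_X_mul, coeff_mul, coeff_mul, Nat.sum_antidiagonal_succ,
      coeff_rhoSeries, dmap_xiX_one_pow_succ, rho_sum_left]
    simp only [rho_xiX_mul_letter_mul, sum_add_distrib, ← mul_sum, ← rho_sum_left,
      ← dmap_xiX_one_pow_succ, coeff_rhoSeries, xiSeries, letterSeries, coeff_mk, shiftLetter_zero,
      shiftLetter_succ]
    abel

theorem altSum_rhoSeries_shuffleSum (a : ℕ) :
    altSum (fun l => rhoSeries (toD1Hom (shuffleSum a l))) = letterSeries (.inl 1) ^ a := by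
  have hletter (u : Letter) (y : Dfree) :
      (1 - X * xiSeries) * rhoSeries (letter u * y) = letterSeries u * rhoSeries y := by
    rw [sub_mul, one_mul, mul_assoc, sub_eq_iff_eq_add']
    exact rhoSeries_letter_mul u y
  have hz (w : DOne) : (1 - X * xiSeries) * rhoSeries (toD1Hom (zO * w)) =
      letterSeries (.inl 1) * rhoSeries (toD1Hom w) := by
    rw [map_mul, toD1Hom_zO, hletter]
  have hξ (w : DOne) : (1 - X * xiSeries) * rhoSeries (toD1Hom (xiO * w)) =
      xiSeries * rhoSeries (toD1Hom w) := by
    rw [map_mul, toD1Hom_xiO, hletter]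
    rfl
  have hP1 : (1 - X * xiSeries) * rhoSeries 1 = 1 := by
    rw [sub_mul, one_mul, mul_assoc, sub_eq_iff_eq_add]
    exact rhoSeries_one
  have := altSum_shuffleSum (rhoSeries.comp toD1Hom.toAddMonoidHom) (sub_add_cancel 1 _) hz hξ a
  simpa [hP1] using this

lemma coeff_letterSeries_inl_one_pow (s a : ℕ) :
    coeff s (letterSeries (.inl 1) ^ a) =
      ∑ γ ∈ Ifin a (s + a), (List.ofFn fun j : Fin a => zOf (γ j)).prod := by
  have hX : X * letterSeries (.inl 1) = PowerSeries.mk zOf := by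
    ext (_ | k) : 1
    · simp [zOf]
    · rw [coeff_succ_X_mul, letterSeries, coeff_mk, coeff_mk, zOf, dif_pos k.succ_pos]
      rfl
  rw [← coeff_X_pow_mul _ a s, ← ((commute_X _).symm.mul_pow a), hX,
    coeff_pow_eq_sum_Ifin (by simp [← coeff_zero_eq_constantCoeff_apply, zOf])]
  simp

end RhoSeries

section PhiSeries

lemma zO_pow (m : ℕ) : zO ^ m = .single (FreeMonoid.ofList (List.replicate m false)) 1 := by
  induction m with
  | zero => rfl
  | succ m ih =>
    rw [pow_succ', ih, zO, MonoidAlgebra.single_mul_single, one_mul, List.replicate_succ,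
      FreeMonoid.ofList_cons]

lemma phi_zero_apply (x : DOne) : phi 0 x = x := by
  have phiW_zero (w : List Bool) : phiW 0 w = .single (FreeMonoid.ofList w) 1 := by
    induction w with
    | nil => simp [phiW, MonoidAlgebra.one_def]
    | cons b w ih =>
      cases b <;> simp [phiW, ih, zO, xiO, MonoidAlgebra.single_mul_single, FreeMonoid.ofList_cons]
  induction x using MonoidAlgebra.induction_linear with
  | zero => exact map_zero (phiHom 0)
  | add x y hx hy => rw [phi_add, hx, hy]
  | single w b => simp [phi_single, phiW_zero, -zsmul_eq_mul]

lemma phi_succ_one (n : ℕ) : phi (n + 1) 1 = xiO * zO ^ n := by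
  simp [MonoidAlgebra.one_def, phi_single, phiW, zO_pow, xiO, MonoidAlgebra.single_mul_single,
    FreeMonoid.ofList_cons]

lemma phi_zO_mul (s : ℕ) (x : DOne) :
    phi s (zO * x) = zO * phi s x + ∑ i ∈ Icc 1 s, xiO * zO ^ i * phi (s - i) x := by
  induction x using MonoidAlgebra.induction_linear with
  | zero => simp [phi_zero]
  | add x y hx hy => simp only [mul_add, phi_add, hx, hy, sum_add_distrib]; abel
  | single w b =>
    simp only [zO, MonoidAlgebra.single_mul_single, one_mul, phi_single, FreeMonoid.toList_of_mul,
      phiW, smul_add, smul_sum, mul_smul_comm]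

lemma phi_xiO_mul (s : ℕ) (x : DOne) :
    phi s (xiO * x) = ∑ i ∈ range (s + 1), xiO * zO ^ i * phi (s - i) x := by
  induction x using MonoidAlgebra.induction_linear with
  | zero => simp [phi_zero]
  | add x y hx hy => simp only [mul_add, phi_add, hx, hy, sum_add_distrib]
  | single w b =>
    simp only [xiO, MonoidAlgebra.single_mul_single, one_mul, phi_single, FreeMonoid.toList_of_mul,
      phiW, smul_sum, mul_smul_comm]

def phiSeries : DOne →+ DOne⟦X⟧ where
  toFun x := mk fun s => phi s x
  map_zero' := by ext s : 1; simp [phi_zero]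
  map_add' _ _ := by ext : 1; simp [phi_add]

lemma coeff_phiSeries (s : ℕ) (x : DOne) : coeff s (phiSeries x) = phi s x :=
  coeff_mk _ fun s => phi s x

def xiGeomSeries : DOne⟦X⟧ := mk fun i => xiO * zO ^ i

lemma phiSeries_one : phiSeries 1 = 1 + X * xiGeomSeries := by
  ext (_ | n) : 1
  · simp [coeff_phiSeries, phi_zero_apply]
  · simp [coeff_phiSeries, phi_succ_one, coeff_one, xiGeomSeries]

lemma phiSeries_zO_mul (x : DOne) : phiSeries (zO * x) = phiSeries 1 * (C zO * phiSeries x) := by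
  ext n : 1
  rw [coeff_mul, sum_antidiagonal_eq_add_sum_Icc n fun i j => coeff i (phiSeries 1) * coeff j _]
  simp only [coeff_phiSeries, coeff_C_mul, phi_zero_apply, one_mul, phi_zO_mul]
  congr 1
  refine sum_congr rfl fun i hi => ?_
  obtain ⟨j, rfl⟩ := Nat.exists_eq_add_one.2 (mem_Icc.1 hi).1
  simp only [phi_succ_one, pow_succ, mul_assoc]

lemma phiSeries_xiO_mul (x : DOne) : phiSeries (xiO * x) = xiGeomSeries * phiSeries x := by
  ext n : 1
  rw [coeff_mul, Nat.sum_antidiagonal_eq_sum_range_succ fun i j => coeff i xiGeomSeries * coeff j _]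
  simp [coeff_phiSeries, phi_xiO_mul, xiGeomSeries, mul_assoc]

theorem altSum_phiSeries_shuffleSum (a : ℕ) :
    altSum (fun l => phiSeries (shuffleSum a l)) = C (zO ^ a) := by
  set L := invOfUnit (phiSeries 1) 1
  have hL : L * phiSeries 1 = 1 := invOfUnit_mul _ _ (by simp [← coeff_zero_eq_constantCoeff_apply,
    coeff_phiSeries, phi_zero_apply])
  have hV : L + X * (L * xiGeomSeries) = 1 := by
    rw [← mul_assoc, ← (commute_X L).eq, mul_assoc, ← mul_one_add, ← phiSeries_one, hL]
  have hz (w : DOne) : L * phiSeries (zO * w) = C zO * phiSeries w := by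
    rw [phiSeries_zO_mul, ← mul_assoc, hL, one_mul]
  have hξ (w : DOne) : L * phiSeries (xiO * w) = L * xiGeomSeries * phiSeries w := by
    rw [phiSeries_xiO_mul, mul_assoc]
  rw [altSum_shuffleSum phiSeries hV hz hξ a, hL, mul_one, map_pow]

end PhiSeries

section PhiInverse

def compSum (r n : ℕ) (x : DOne) : DOne :=
  ∑ c ∈ Ifin r n, ((List.ofFn fun j : Fin r => phi (c j)).foldr (· ∘ ·) id) x

lemma compSum_zero_left (n : ℕ) (x : DOne) : compSum 0 n x = if n = 0 then x else 0 := by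
  rw [compSum, sum_Ifin_zero]
  rfl

lemma compSum_of_lt {r n : ℕ} (h : n < r) (x : DOne) : compSum r n x = 0 := by
  rw [compSum, Ifin_eq_empty_of_lt h, sum_empty]

lemma compSum_succ (r n : ℕ) (x : DOne) :
    compSum (r + 1) n x = ∑ i ∈ Icc 1 n, phi i (compSum r (n - i) x) := by
  simp [compSum, sum_Ifin_succ, phi_sum, List.ofFn_succ]

lemma sum_phi_compSum (r n : ℕ) (x : DOne) :
    ∑ p ∈ antidiagonal n, phi p.1 (compSum r p.2 x) = compSum r n x + compSum (r + 1) n x := by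
  rw [sum_antidiagonal_eq_add_sum_Icc n fun i j => phi i (compSum r j x), phi_zero_apply,
    compSum_succ]

lemma PhiM_eq_sum_compSum {n N : ℕ} (h : n < N) (x : DOne) :
    PhiM n x = ∑ r ∈ range N, (-1 : ℤ) ^ r • compSum r n x := by
  cases n with
  | zero =>
    rw [sum_eq_single_of_mem 0 (mem_range.2 h) fun r _ hr => by
      rw [compSum_of_lt (Nat.pos_of_ne_zero hr), smul_zero], compSum_zero_left, pow_zero,
      one_smul, if_pos rfl]
    rfl
  | succ m =>
    change ∑ r ∈ Icc 1 (m + 1), (-1 : ℤ) ^ r • compSum r (m + 1) x = _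
    refine sum_subset (fun r hr => ?_) (fun r _ hr => ?_)
    · simp only [mem_Icc, mem_range] at hr ⊢
      omega
    · rcases Nat.eq_zero_or_pos r with rfl | hpos
      · rw [compSum_zero_left, if_neg m.succ_ne_zero, smul_zero]
      · rw [compSum_of_lt (by simp only [mem_Icc, not_and, not_le] at hr; exact hr hpos), smul_zero]

/-- `Φ(t) = Σ_ℓ Φ_ℓ t^ℓ` is a right inverse of `φ(t) = Σ_s φ_s t^s`. -/
lemma sum_phi_PhiM (n : ℕ) (x : DOne) :
    ∑ p ∈ antidiagonal n, phi p.1 (PhiM p.2 x) = if n = 0 then x else 0 := by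
  calc ∑ p ∈ antidiagonal n, phi p.1 (PhiM p.2 x)
      = ∑ p ∈ antidiagonal n, phi p.1 (∑ r ∈ range (n + 1), (-1 : ℤ) ^ r • compSum r p.2 x) :=
        sum_congr rfl fun p hp => by rw [PhiM_eq_sum_compSum (Nat.antidiagonal.snd_lt hp)]
    _ = ∑ r ∈ range (n + 1), (-1 : ℤ) ^ r • (compSum r n x + compSum (r + 1) n x) := by
        simp only [phi_sum, phi_zsmul]
        rw [sum_comm]
        simp only [← smul_sum, sum_phi_compSum]
    _ = ∑ r ∈ range (n + 1),
          ((-1 : ℤ) ^ r • compSum r n x - (-1 : ℤ) ^ (r + 1) • compSum (r + 1) n x) :=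
        sum_congr rfl fun r _ => by rw [pow_succ, mul_neg_one, neg_smul, sub_neg_eq_add, smul_add]
    _ = compSum 0 n x - (-1 : ℤ) ^ (n + 1) • compSum (n + 1) n x := by
        rw [sum_range_sub', pow_zero, one_smul]
    _ = if n = 0 then x else 0 := by
        rw [compSum_of_lt (Nat.lt_succ_self n), smul_zero, sub_zero, compSum_zero_left]

/-- Convolution with `φ(t)` is injective because `φ_0 = id`. -/
lemma eq_of_sum_phi_eq {f g : ℕ → DOne}
    (h : ∀ n, ∑ p ∈ antidiagonal n, phi p.1 (f p.2) = ∑ p ∈ antidiagonal n, phi p.1 (g p.2)) :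
    f = g := by
  funext n
  induction n using Nat.strong_induction_on with
  | _ n ih =>
    have hn := h n
    have htail : ∑ i ∈ Icc 1 n, phi i (f (n - i)) = ∑ i ∈ Icc 1 n, phi i (g (n - i)) :=
      sum_congr rfl fun i hi => by
        obtain ⟨h1, h2⟩ := mem_Icc.1 hi
        rw [ih (n - i) (by omega)]
    rw [sum_antidiagonal_eq_add_sum_Icc n fun i j => phi i (f j),
      sum_antidiagonal_eq_add_sum_Icc n fun i j => phi i (g j), phi_zero_apply, phi_zero_apply,
      htail] at hn
    exact add_right_cancel hn

lemma PhiM_zO_pow (a l : ℕ) : PhiM l (zO ^ a) = (-1 : ℤ) ^ l • shuffleSum a l := by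
  refine congr_fun (eq_of_sum_phi_eq (f := fun l => PhiM l (zO ^ a))
    (g := fun l => (-1 : ℤ) ^ l • shuffleSum a l) fun n => ?_) l
  have h := congr_arg (coeff n) (altSum_phiSeries_shuffleSum a)
  rw [coeff_altSum, coeff_C, ← Nat.sum_antidiagonal_swap] at h
  simp only [sum_phi_PhiM, phi_zsmul, ← h, Prod.fst_swap, Prod.snd_swap, coeff_phiSeries]

end PhiInverse

lemma Zmap_zO_pow_eq_coeff (s a : ℕ) :
    Zmap s (zO ^ a) = coeff s (altSum fun l => rhoSeries (toD1Hom (shuffleSum a l))) := by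
  rw [Zmap, coeff_altSum,
    ← Nat.sum_antidiagonal_eq_sum_range_succ fun l j => rho (dmap (xiX 1 ^ j)) (toD1 (PhiM l _))]
  refine sum_congr rfl fun p _ => ?_
  rw [PhiM_zO_pow, ← toD1Hom_apply, map_zsmul, rho_zsmul_right, coeff_rhoSeries]

theorem Z_z_pow_general (s a : ℕ) :
    Zmap s (zO ^ a) =
      ∑ γ ∈ Ifin a (s + a), (List.ofFn fun j : Fin a => zOf (γ j)).prod := by
  rw [Zmap_zO_pow_eq_coeff, altSum_rhoSeries_shuffleSum, coeff_letterSeries_inl_one_pow]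

/-- For all integers `s ≥ 0` and `a ≥ 1`,
`Z_s(z_1^a) = Σ_{γ ∈ I(a,s+a)} z_{γ_1} ⋯ z_{γ_a}`. -/
theorem Z_z_pow (s a : ℕ) (ha : 1 ≤ a) :
    Zmap s (zO ^ a) =
      ∑ γ ∈ Ifin a (s + a), (List.ofFn fun j : Fin a => zOf (γ j)).prod :=
  Z_z_pow_general s a

end
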